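/- Let (x_{n,m})_{n,m∈ℕ} be a double sequence of nonnegative real numbers such that limsup_{n→∞} limsup_{m→∞} x_{n,m} < ∞, and let h : ℕ → ℕ be nondecreasing (h(n) ≤ h(n+1) for all n). Then there exists a strictly increasing sequence (m_n)_{n∈ℕ} of natural numbers with m_n > (h(n))² for all n, such that limsup_{n→∞} x_{n,m_n} ≤ limsup_{n→∞} limsup_{m→∞} x_{n,m}. -/
import Mathlib


open Filter ENNReal

/-- diagonal subsequence along which the iterated `limsup` of a nonnegative
double sequence is not exceeded, with `m_n > (h n)²` for a given nondecreasing `h`. -/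
theorem limsup_diagonal_subsequence_general (x : ℕ → ℕ → ℝ) (hx : ∀ n m, 0 ≤ x n m)
    (hbd : limsup (fun n => limsup (fun m => (ENNReal.ofReal (x n m))) atTop) atTop < ⊤)
    (h : ℕ → ℕ) (hmono : ∀ n, h n ≤ h (n + 1)) :
    ∃ ms : ℕ → ℕ, StrictMono ms ∧ (∀ n, (h n) ^ 2 < ms n) ∧
      limsup (fun n => (ENNReal.ofReal (x n (ms n)))) atTop ≤
        limsup (fun n => limsup (fun m => (ENNReal.ofReal (x n m))) atTop) atTop := by
  set L : ℕ → ℝ≥0∞ := fun n => limsup (fun m => (ENNReal.ofReal (x n m))) atTop with hL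
  -- key existence: for each n and N there is m > N with x n m ≤ L n + (n:ℝ≥0∞)⁻¹
  have key : ∀ n N : ℕ, ∃ m : ℕ, N < m ∧
      ENNReal.ofReal (x n m) ≤ L n + (n : ℝ≥0∞)⁻¹ := by
    intro n N
    by_cases hT : L n = ⊤
    · exact ⟨N + 1, Nat.lt_succ_self N, by simp [hT]⟩
    · have hlt : L n < L n + (n : ℝ≥0∞)⁻¹ :=
        ENNReal.lt_add_right hT (by simp)
      have hev : ∀ᶠ m in atTop, ENNReal.ofReal (x n m) < L n + (n : ℝ≥0∞)⁻¹ :=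
        eventually_lt_of_limsup_lt hlt
      obtain ⟨m, hm1, hm2⟩ := (hev.and (eventually_gt_atTop N)).exists
      exact ⟨m, hm2, hm1.le⟩
  -- recursive construction
  choose f hf1 hf2 using key
  let ms : ℕ → ℕ := fun n => Nat.rec (f 0 ((h 0) ^ 2))
    (fun k prev => f (k + 1) (max prev ((h (k + 1)) ^ 2))) n
  have hms_succ : ∀ n, ms (n + 1) = f (n + 1) (max (ms n) ((h (n + 1)) ^ 2)) := fun n => rfl
  have hmono' : StrictMono ms := by
    apply strictMono_nat_of_lt_succ
    intro n
    have := hf1 (n + 1) (max (ms n) ((h (n + 1)) ^ 2))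
    rw [hms_succ]
    exact lt_of_le_of_lt (le_max_left _ _) this
  have hsq : ∀ n, (h n) ^ 2 < ms n := by
    intro n
    cases n with
    | zero => exact hf1 0 ((h 0) ^ 2)
    | succ k =>
      have := hf1 (k + 1) (max (ms k) ((h (k + 1)) ^ 2))
      rw [hms_succ]
      exact lt_of_le_of_lt (le_max_right _ _) this
  have hbound : ∀ n, ENNReal.ofReal (x n (ms n)) ≤ L n + (n : ℝ≥0∞)⁻¹ := by
    intro n
    cases n with
    | zero => exact hf2 0 ((h 0) ^ 2)
    | succ k => rw [hms_succ]; exact hf2 (k + 1) _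
  refine ⟨ms, hmono', hsq, ?_⟩
  set A : ℝ≥0∞ := limsup L atTop with hA
  apply le_of_forall_gt_imp_ge_of_dense
  intro b hb
  rcases eq_or_ne b ⊤ with rfl | hbT
  · exact le_top
  obtain ⟨b', hb'1, hb'2⟩ := exists_between hb
  apply limsup_le_of_le (by isBoundedDefault)
  have hevL : ∀ᶠ n in atTop, L n < b' := eventually_lt_of_limsup_lt hb'1
  have hpos : (0 : ℝ≥0∞) < b - b' := tsub_pos_iff_lt.mpr hb'2
  have hev2 : ∀ᶠ n : ℕ in atTop, ((n : ℝ≥0∞))⁻¹ < b - b' :=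
    ENNReal.tendsto_inv_nat_nhds_zero.eventually_lt_const hpos
  filter_upwards [hevL, hev2] with n h1 h2
  calc ENNReal.ofReal (x n (ms n)) ≤ L n + (n : ℝ≥0∞)⁻¹ := hbound n
    _ ≤ b' + (b - b') := add_le_add h1.le h2.le
    _ = b := add_tsub_cancel_of_le hb'2.le
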